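/- Let d ≥ 1 be an integer, λ ≥ 0 and μ ≥ 0 real numbers, and let τ be a symmetric d×d real matrix. Define the isotropic elasticity operator Aτ := λ·tr(τ)·I_d + 2μ·τ. Then ‖Aτ‖_F² ≤ (dλ + 4μ)·(Aτ : τ), where ‖·‖_F is the Frobenius norm and (· : ·) denotes the Frobenius inner product of matrices. -/
import Mathlib


open Matrix BigOperators

/-- Frobenius inner product of two real matrices. -/
noncomputable def frobInner {d : ℕ} (σ τ : Matrix (Fin d) (Fin d) ℝ) : ℝ :=
  ∑ i, ∑ j, σ i j * τ i j

/-- Isotropic elasticity tensor. -/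
noncomputable def elastA {d : ℕ} (lam mu : ℝ) (τ : Matrix (Fin d) (Fin d) ℝ) :
    Matrix (Fin d) (Fin d) ℝ :=
  lam • (τ.trace • (1 : Matrix (Fin d) (Fin d) ℝ)) + (2 * mu) • τ

lemma frob_add_left {d : ℕ} (σ ρ χ : Matrix (Fin d) (Fin d) ℝ) :
    frobInner (σ + ρ) χ = frobInner σ χ + frobInner ρ χ := by
  simp [frobInner, add_mul, Finset.sum_add_distrib]

lemma frob_smul_left {d : ℕ} (c : ℝ) (σ χ : Matrix (Fin d) (Fin d) ℝ) :
    frobInner (c • σ) χ = c * frobInner σ χ := by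
  simp [frobInner, Finset.mul_sum, mul_assoc]

lemma frob_comm {d : ℕ} (σ χ : Matrix (Fin d) (Fin d) ℝ) :
    frobInner σ χ = frobInner χ σ := by
  simp [frobInner, mul_comm]

lemma frob_one_one {d : ℕ} : frobInner (1 : Matrix (Fin d) (Fin d) ℝ) 1 = d := by
  simp [frobInner, Matrix.one_apply]

lemma frob_one {d : ℕ} (τ : Matrix (Fin d) (Fin d) ℝ) :
    frobInner 1 τ = τ.trace := by
  simp [frobInner, Matrix.one_apply, Matrix.trace, Matrix.diag]

lemma frob_self_nonneg {d : ℕ} (τ : Matrix (Fin d) (Fin d) ℝ) :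
    0 ≤ frobInner τ τ := by
  apply Finset.sum_nonneg; intro i _
  exact Finset.sum_nonneg fun j _ => mul_self_nonneg _

theorem elastA_frobenius_bound {d : ℕ} (hd : 1 ≤ d) (lam mu : ℝ)
    (hlam : 0 ≤ lam) (hmu : 0 ≤ mu) (τ : Matrix (Fin d) (Fin d) ℝ) (hτ : τ.IsSymm) :
    frobInner (elastA lam mu τ) (elastA lam mu τ)
      ≤ (d * lam + 4 * mu) * frobInner (elastA lam mu τ) τ := by
  set t := τ.trace with ht
  set s := frobInner τ τ with hs
  have hs0 : 0 ≤ s := frob_self_nonneg τ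
  have hAτ : frobInner (elastA lam mu τ) τ = lam * (t * t) + 2 * mu * s := by
    rw [elastA, frob_add_left, frob_smul_left, frob_smul_left, frob_smul_left,
      frob_one]
  have hA1 : frobInner (elastA lam mu τ) 1 = lam * (t * ↑d) + 2 * mu * t := by
    rw [elastA, frob_add_left, frob_smul_left, frob_smul_left, frob_smul_left,
      frob_one_one, frob_comm τ 1, frob_one]
  have hAA : frobInner (elastA lam mu τ) (elastA lam mu τ)
      = lam * t * (lam * (t * ↑d) + 2 * mu * t) + 2 * mu * (lam * (t * t) + 2 * mu * s) := by
    have h1A : frobInner 1 (elastA lam mu τ) = lam * (t * ↑d) + 2 * mu * t := by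
      rw [frob_comm, hA1]
    have hτA : frobInner τ (elastA lam mu τ) = lam * (t * t) + 2 * mu * s := by
      rw [frob_comm, hAτ]
    calc frobInner (elastA lam mu τ) (elastA lam mu τ)
        = frobInner (lam • (t • 1) + (2 * mu) • τ) (elastA lam mu τ) := rfl
      _ = lam * (t * frobInner 1 (elastA lam mu τ)) + 2 * mu * frobInner τ (elastA lam mu τ) := by
          rw [frob_add_left, frob_smul_left, frob_smul_left, frob_smul_left]
      _ = _ := by rw [h1A, hτA]; ring
  rw [hAA, hAτ]
  have hd1 : (1 : ℝ) ≤ (d : ℝ) := by exact_mod_cast hd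
  nlinarith [mul_nonneg (mul_nonneg hlam hmu) hs0, mul_nonneg hmu (mul_nonneg hmu hs0),
    mul_nonneg (mul_nonneg (mul_nonneg hlam hmu) hs0) (le_trans zero_le_one hd1)]
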